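/- Let P = {x₁, …, x_μ} with μ ≥ 3 be a population consisting only of Pareto-optimal points of LOTZ (i.e. points of the form 1^j 0^{n−j}), sorted so that f₁(x₁) < ⋯ < f₁(x_μ). If the hypervolume contribution is computed with a reference point (r₁, r₂) with r₁ ≤ −n² and r₂ ≤ −n², then HVC(x_i, P) ≤ n²/4 < n² ≤ min{HVC(x₁, P), HVC(x_μ, P)} for every 1 < i < μ; likewise CDC assigns infinite value exactly to x₁ and x_μ. Consequently, the Highest Diversity Contribution selection with either measure always selects a parent with minimum or maximum number of ones in P. -/

import Mathlib

noncomputable section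
open scoped ENNReal
attribute [local instance] Classical.propDecidable

namespace EMO


/-- A bit string of length `n`. -/
abbrev BitString (n : ℕ) := Fin n → Bool

/-- Number of one-bits. -/
def onesCount {n : ℕ} (x : BitString n) : ℕ :=
  (Finset.univ.filter fun i => x i = true).card

def allOnes (n : ℕ) : BitString n := fun _ => true
def allZeros (n : ℕ) : BitString n := fun _ => false

/-- The bi-objective function OneMinMax. -/
def OneMinMax {n : ℕ} (x : BitString n) : ℤ × ℤ :=
  ((onesCount x : ℤ), (n : ℤ) - (onesCount x : ℤ))

/-- Number of leading ones. -/
def leadingOnes {n : ℕ} (x : BitString n) : ℕ :=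
  (Finset.univ.filter fun i : Fin n => ∀ j : Fin n, j ≤ i → x j = true).card

/-- Number of trailing zeros. -/
def trailingZeros {n : ℕ} (x : BitString n) : ℕ :=
  (Finset.univ.filter fun i : Fin n => ∀ j : Fin n, i ≤ j → x j = false).card

/-- The bi-objective function LOTZ. -/
def LOTZ {n : ℕ} (x : BitString n) : ℤ × ℤ :=
  ((leadingOnes x : ℤ), (trailingZeros x : ℤ))

/-- `y` dominates `x` (maximisation). -/
def dominates {n : ℕ} (f : BitString n → ℤ × ℤ) (y x : BitString n) : Prop :=
  (f x).1 ≤ (f y).1 ∧ (f x).2 ≤ (f y).2 ∧ f x ≠ f y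

/-- `y` weakly dominates `x` (maximisation). -/
def weaklyDominates {n : ℕ} (f : BitString n → ℤ × ℤ) (y x : BitString n) : Prop :=
  (f x).1 ≤ (f y).1 ∧ (f x).2 ≤ (f y).2

/-- Pareto optimality. -/
def paretoOptimal {n : ℕ} (f : BitString n → ℤ × ℤ) (x : BitString n) : Prop :=
  ¬ ∃ y : BitString n, dominates f y x

/-- A population of mutually non-dominated points. -/
def mutuallyNonDominated {n : ℕ} (f : BitString n → ℤ × ℤ)
    (P : Finset (BitString n)) : Prop :=
  ∀ x ∈ P, ∀ y ∈ P, ¬ dominates f y x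

/-- Flip bit `i` of `x`. -/
def flipBit {n : ℕ} (x : BitString n) (i : Fin n) : BitString n :=
  Function.update x i (!x i)

/-- `y` is a Hamming neighbour of `x`. -/
def hammingNeighbour {n : ℕ} (x y : BitString n) : Prop :=
  ∃ i : Fin n, y = flipBit x i

/-- `x` is good relative to population `P`: it is Pareto optimal and has a Pareto-optimal
Hamming neighbour whose objective vector is not attained by any member of `P`. -/
def isGood {n : ℕ} (f : BitString n → ℤ × ℤ) (P : Finset (BitString n))
    (x : BitString n) : Prop :=
  paretoOptimal f x ∧
    ∃ y : BitString n, hammingNeighbour x y ∧ paretoOptimal f y ∧ ∀ z ∈ P, f z ≠ f y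

/-- `x` is bad relative to population `P`. -/
def isBad {n : ℕ} (f : BitString n → ℤ × ℤ) (P : Finset (BitString n))
    (x : BitString n) : Prop :=
  paretoOptimal f x ∧
    ¬ ∃ y : BitString n, hammingNeighbour x y ∧ paretoOptimal f y ∧ ∀ z ∈ P, f z ≠ f y

/-- `P` covers the whole Pareto front of `f`. -/
def coversFront {n : ℕ} (f : BitString n → ℤ × ℤ) (P : Finset (BitString n)) : Prop :=
  ∀ x : BitString n, paretoOptimal f x → ∃ z ∈ P, f z = f x

/-- The hypervolume contribution of `x` to `P` (for a population of mutually
non-dominated points, with reference point `r`). -/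
def HVC {n : ℕ} (f : BitString n → ℤ × ℤ) (r : ℤ × ℤ) (x : BitString n)
    (P : Finset (BitString n)) : ℤ :=
  ((f x).1 - (((P.filter fun z => (f z).1 < (f x).1).image fun z => (f z).1).max.unbotD r.1)) *
  ((f x).2 - (((P.filter fun z => (f z).2 < (f x).2).image fun z => (f z).2).max.unbotD r.2))

/-- Crowding distance of `x` in `P` with respect to a single objective `g`: infinite for the
boundary points, and otherwise the normalised difference between successor and predecessor. -/
def CDCobj {n : ℕ} (g : BitString n → ℤ) (x : BitString n)
    (P : Finset (BitString n)) : ℝ≥0∞ :=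
  if (∀ z ∈ P, g x ≤ g z) ∨ (∀ z ∈ P, g z ≤ g x) then ⊤
  else
    (((((P.filter fun z => g x < g z).image g).min.untopD 0 -
        (((P.filter fun z => g z < g x).image g).max.unbotD 0)).toNat : ℝ≥0∞)) /
      ((((P.image g).max.unbotD 0 - ((P.image g).min.untopD 0)).toNat : ℝ≥0∞))

/-- The crowding distance contribution of `x` to `P`. -/
def CDC {n : ℕ} (f : BitString n → ℤ × ℤ) (x : BitString n)
    (P : Finset (BitString n)) : ℝ≥0∞ :=
  CDCobj (fun z => (f z).1) x P + CDCobj (fun z => (f z).2) x P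

/-- A diversity measure `c` is diversity-favouring on `S`. -/
def diversityFavouring {n : ℕ} {α : Type*} [Preorder α] (f : BitString n → ℤ × ℤ)
    (c : BitString n → Finset (BitString n) → α) (S : Set (BitString n)) : Prop :=
  ∀ P : Finset (BitString n), mutuallyNonDominated f P →
    ∀ x ∈ P, ∀ y ∈ P, x ∈ S → y ∈ S → isBad f P x → isGood f P y → c x P < c y P

/-- The default bit string (used only to make selection kernels total). -/
def defaultBS (n : ℕ) : BitString n := fun _ => false

/-- Local mutation: flip a single uniformly random bit. -/
def localMutation {n : ℕ} (hn : 0 < n) (x : BitString n) : PMF (BitString n) :=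
  haveI : Nonempty (Fin n) := ⟨⟨0, hn⟩⟩
  (PMF.uniformOfFintype (Fin n)).map (flipBit x)

/-- A Bernoulli coin with success probability `1/n` (for `n ≥ 1`). -/
def bitFlipCoin (n : ℕ) : PMF Bool :=
  PMF.ofFintype (fun b => cond b (min ((n : ℝ≥0∞))⁻¹ 1) (1 - min ((n : ℝ≥0∞))⁻¹ 1))
    (by simp [Fintype.sum_bool, add_tsub_cancel_of_le (min_le_right _ _)])

/-- Global (standard bit) mutation: flip each bit independently with probability `1/n`. -/
def globalMutationAux {n : ℕ} : List (Fin n) → BitString n → PMF (BitString n)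
  | [], x => PMF.pure x
  | i :: is, x => (bitFlipCoin n).bind fun b =>
      globalMutationAux is (if b then flipBit x i else x)

def globalMutation {n : ℕ} (x : BitString n) : PMF (BitString n) :=
  globalMutationAux (List.finRange n) x

/-- Survival selection: if `s'` is not dominated by any member of `P`, add `s'` to `P` and
remove all members weakly dominated by `s'`. -/
def updatePop {n : ℕ} (f : BitString n → ℤ × ℤ) (P : Finset (BitString n))
    (s' : BitString n) : Finset (BitString n) :=
  if ∃ z ∈ P, dominates f z s' then P
  else insert s' (P.filter fun z => ¬ weaklyDominates f s' z)

/-- One iteration of (G)SEMO with parent-selection kernel `select` and mutation `mutate`. -/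
def step {n : ℕ} (f : BitString n → ℤ × ℤ)
    (select : Finset (BitString n) → PMF (BitString n))
    (mutate : BitString n → PMF (BitString n))
    (P : Finset (BitString n)) : PMF (Finset (BitString n)) :=
  (select P).bind fun s => (mutate s).map fun s' => updatePop f P s'

/-- The L-dominant attribute `L(x) = LO(x) + TZ(x)`. -/
def Ldom {n : ℕ} (x : BitString n) : ℕ := leadingOnes x + trailingZeros x

/-- The subpopulation of points with maximum L-dominant attribute. -/
def maxLSub {n : ℕ} (P : Finset (BitString n)) : Finset (BitString n) :=
  P.filter fun x => ∀ z ∈ P, Ldom z ≤ Ldom x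

/-- One iteration of the modified GSEMO: parent selection (and the diversity contribution)
is restricted to the subpopulation of points with maximum L-dominant attribute. -/
def stepMod {n : ℕ} (f : BitString n → ℤ × ℤ)
    (select : Finset (BitString n) → PMF (BitString n))
    (mutate : BitString n → PMF (BitString n))
    (P : Finset (BitString n)) : PMF (Finset (BitString n)) :=
  (select (maxLSub P)).bind fun s => (mutate s).map fun s' => updatePop f P s'

/-- Initial population: a single uniformly random bit string. -/
def initDist (n : ℕ) : PMF (Finset (BitString n)) :=
  (PMF.uniformOfFintype (BitString n)).map fun x => {x}

/-- Distribution of the population after `t` iterations. -/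
def stateDist {S : Type*} (init : PMF S) (st : S → PMF S) : ℕ → PMF S
  | 0 => init
  | t + 1 => (stateDist init st t).bind st

/-- Expected number of iterations until an (absorbing) goal predicate is reached,
expressed as `∑ₜ Pr[goal not yet reached at time t]`. -/
def expectedRuntime {S : Type*} (init : PMF S) (st : S → PMF S) (goal : S → Prop) : ℝ≥0∞ :=
  ∑' t : ℕ, (stateDist init st t).toOuterMeasure {s | ¬ goal s}

/-- Uniform parent selection. -/
def uniformSelect {n : ℕ} (P : Finset (BitString n)) : PMF (BitString n) :=
  if h : P.Nonempty then PMF.uniformOfFinset P h else PMF.pure (defaultBS n)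

/-- Highest Diversity Contribution (HDC) parent selection: select an individual with
maximum diversity contribution, ties broken uniformly at random. -/
def HDCSelect {n : ℕ} {α : Type*} [LinearOrder α]
    (c : BitString n → Finset (BitString n) → α)
    (P : Finset (BitString n)) : PMF (BitString n) :=
  if h : P.Nonempty then
    PMF.uniformOfFinset (P.filter fun x => ∀ y ∈ P, c y P ≤ c x P)
      (by
        obtain ⟨b, hb, hmax⟩ := P.exists_max_image (fun x => c x P) h
        exact ⟨b, Finset.mem_filter.mpr ⟨hb, hmax⟩⟩)
  else PMF.pure (defaultBS n)

/-- Non-Minimum Uniform at Random (NMUAR) parent selection: select uniformly at random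
among all individuals whose diversity contribution is not minimal (from the whole
population if all contributions are equal). -/
def NMUARSelect {n : ℕ} {α : Type*} [LinearOrder α]
    (c : BitString n → Finset (BitString n) → α)
    (P : Finset (BitString n)) : PMF (BitString n) :=
  if h : P.Nonempty then
    if hQ : (P.filter fun x => ∃ y ∈ P, c y P < c x P).Nonempty then
      PMF.uniformOfFinset _ hQ
    else PMF.uniformOfFinset P h
  else PMF.pure (defaultBS n)

/-- Tournament selection with tournament size `μ = |P|`: draw `μ` individuals uniformly at
random with replacement from `P` and select one with the highest diversity contribution
among the drawn multiset (ties broken uniformly at random). -/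
def tournamentSelect {n : ℕ} {α : Type*} [LinearOrder α]
    (c : BitString n → Finset (BitString n) → α)
    (P : Finset (BitString n)) : PMF (BitString n) :=
  if h : P.Nonempty then
    haveI : Nonempty {x // x ∈ P} := h.to_subtype
    (PMF.uniformOfFintype (Fin P.card → {x // x ∈ P})).bind fun g =>
      PMF.uniformOfFinset
        ((Finset.univ.image fun i => ((g i : {x // x ∈ P}) : BitString n)).filter fun x =>
          ∀ y ∈ Finset.univ.image fun i => ((g i : {x // x ∈ P}) : BitString n), c y P ≤ c x P)
        (by
          have hne : (Finset.univ.image fun i => ((g i : {x // x ∈ P}) : BitString n)).Nonempty := by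
            refine ⟨(g ⟨0, Finset.card_pos.mpr h⟩ : {x // x ∈ P}), ?_⟩
            exact Finset.mem_image.mpr ⟨⟨0, Finset.card_pos.mpr h⟩, Finset.mem_univ _, rfl⟩
          obtain ⟨b, hb, hmax⟩ :=
            Finset.exists_max_image _ (fun x => c x P) hne
          exact ⟨b, Finset.mem_filter.mpr ⟨hb, hmax⟩⟩)
  else PMF.pure (defaultBS n)

/-- Exponential ranking scheme: probability of selecting the `i`-th ranked individual
(1-indexed) in a population of size `μ`. -/
def rExp (i μ : ℕ) : ℝ≥0∞ :=
  (2 : ℝ≥0∞)⁻¹ ^ i / ∑ j ∈ Finset.Icc 1 μ, (2 : ℝ≥0∞)⁻¹ ^ j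

/-- Power-law ranking scheme. -/
def rPow (i μ : ℕ) : ℝ≥0∞ :=
  ((i : ℝ≥0∞) ^ 2)⁻¹ / ∑ j ∈ Finset.Icc 1 μ, ((j : ℝ≥0∞) ^ 2)⁻¹

/-- Harmonic ranking scheme. -/
def rHarm (i μ : ℕ) : ℝ≥0∞ :=
  (i : ℝ≥0∞)⁻¹ / ∑ j ∈ Finset.Icc 1 μ, (j : ℝ≥0∞)⁻¹


/-- `select` implements a rank-based parent-selection scheme with rank probabilities
`r i μ` (1-indexed rank `i`, population size `μ`) with respect to the diversity
contribution `c`, for some non-increasing ordering of the population by `c`. -/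
def implementsRankScheme {n : ℕ} {α : Type*} [Preorder α]
    (c : BitString n → Finset (BitString n) → α) (r : ℕ → ℕ → ℝ≥0∞)
    (select : Finset (BitString n) → PMF (BitString n)) : Prop :=
  ∀ P : Finset (BitString n), P.Nonempty →
    ∃ l : List (BitString n), l.Nodup ∧ l.toFinset = P ∧
      l.Chain' (fun a b => c b P ≤ c a P) ∧
      (∀ i : Fin l.length, select P (l.get i) = r (i.val + 1) P.card) ∧
      (∀ x : BitString n, x ∉ P → select P x = 0)

/-- The Pareto-optimal point `1^i 0^(n-i)` of LOTZ. -/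
def opt (n i : ℕ) : BitString n := fun t => decide ((t : ℕ) < i)

/-- The whole Pareto set of LOTZ as a population. -/
def frontSet (n : ℕ) : Finset (BitString n) := (Finset.range (n + 1)).image (opt n)

/-- `P` has a gap at position `i`. -/
def hasGapAt {n : ℕ} (P : Finset (BitString n)) (i : ℕ) : Prop :=
  opt n i ∉ P ∧ (∃ j, j < i ∧ opt n j ∈ P) ∧ (∃ k, i < k ∧ k ≤ n ∧ opt n k ∈ P)

/-- `P` has a gap at some position `i` with `n/4 ≤ i ≤ 3n/4`. -/
def gapInRange (n : ℕ) (P : Finset (BitString n)) : Prop :=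
  ∃ i : ℕ, n ≤ 4 * i ∧ 4 * i ≤ 3 * n ∧ hasGapAt P i

/-- `P` contains both `0^n` and `1^n`. -/
def bothExtremes (n : ℕ) (P : Finset (BitString n)) : Prop :=
  allZeros n ∈ P ∧ allOnes n ∈ P

/-- The chain stopped (frozen) as soon as `cond` holds. -/
def stopWhen {S : Type*} (cond : S → Prop) (st : S → PMF S) (s : S) : PMF S :=
  if cond s then PMF.pure s else st s

/-! On the Pareto front of LOTZ the objective vectors lie on the antidiagonal `f₁ + f₂ = n`
with nonnegative coordinates. The hypervolume box of an inner point then has sides `a, b ≥ 1`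
with `a + b ≤ n`, so by AM-GM its area is at most `n²/4`; the box of an extreme point reaches
the far-away reference point along one side, so its area is at least `n²`. Crowding distance is
infinite exactly at the boundary points of either objective, and on the antidiagonal the
boundary points of the two objectives coincide. Hence both contributions are maximal only at
extreme points, and on the front the number of ones is the number of leading ones. -/

section Boundary

variable {α β γ : Type*}

def IsBoundary [Preorder β] (g : α → β) (P : Finset α) (x : α) : Prop :=
  (∀ y ∈ P, g x ≤ g y) ∨ (∀ y ∈ P, g y ≤ g x)

theorem not_isBoundary_iff [LinearOrder β] {g : α → β} {P : Finset α} {x : α} :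
    ¬ IsBoundary g P x ↔ (∃ y ∈ P, g y < g x) ∧ ∃ y ∈ P, g x < g y := by
  simp only [IsBoundary, not_or, not_forall, not_le, exists_prop]

theorem isBoundary_congr_of_le_iff [Preorder β] [Preorder γ] {g : α → β} {g' : α → γ}
    {P : Finset α} {x : α} (hx : x ∈ P) (h : ∀ y ∈ P, ∀ z ∈ P, g y ≤ g z ↔ g' y ≤ g' z) :
    IsBoundary g P x ↔ IsBoundary g' P x :=
  or_congr (forall₂_congr fun y hy => h x hx y hy) (forall₂_congr fun y hy => h y hy x hx)

theorem isBoundary_congr_of_le_iff_ge [Preorder β] [Preorder γ] {g : α → β} {g' : α → γ}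
    {P : Finset α} {x : α} (hx : x ∈ P) (h : ∀ y ∈ P, ∀ z ∈ P, g y ≤ g z ↔ g' z ≤ g' y) :
    IsBoundary g P x ↔ IsBoundary g' P x :=
  (or_congr (forall₂_congr fun y hy => h x hx y hy)
    (forall₂_congr fun y hy => h y hy x hx)).trans or_comm

theorem isBoundary_of_mem_support_HDCSelect {n : ℕ} [LinearOrder β] [LinearOrder γ]
    {c : BitString n → Finset (BitString n) → β} {g : BitString n → γ}
    {P : Finset (BitString n)} {x : BitString n} (b : β)
    (hlt : ∀ y ∈ P, ¬ IsBoundary g P y → c y P < b)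
    (hge : ∀ y ∈ P, IsBoundary g P y → b ≤ c y P)
    (hx : x ∈ (HDCSelect c P).support) : IsBoundary g P x := by
  rcases P.eq_empty_or_nonempty with rfl | hP
  · exact Or.inl fun y hy => absurd hy (Finset.notMem_empty y)
  rw [HDCSelect, dif_pos hP, PMF.support_uniformOfFinset, Finset.mem_coe,
    Finset.mem_filter] at hx
  obtain ⟨y, hy, hmin⟩ := P.exists_min_image g hP
  by_contra hxb
  exact (hlt x hx.1 hxb).not_ge ((hge y hy (Or.inl hmin)).trans (hx.2 y hy))

def OnAntidiagonal (f : α → ℤ × ℤ) (m : ℤ) (P : Finset α) : Prop :=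
  ∀ x ∈ P, 0 ≤ (f x).1 ∧ 0 ≤ (f x).2 ∧ (f x).1 + (f x).2 = m

theorem OnAntidiagonal.isBoundary_snd_iff {f : α → ℤ × ℤ} {m : ℤ} {P : Finset α} {x : α}
    (hP : OnAntidiagonal f m P) (hx : x ∈ P) :
    IsBoundary (fun z => (f z).2) P x ↔ IsBoundary (fun z => (f z).1) P x :=
  isBoundary_congr_of_le_iff_ge hx fun y hy z hz => by
    have := (hP y hy).2.2
    have := (hP z hz).2.2
    constructor <;> intro <;> linarith

end Boundary

section Hypervolume

variable {n : ℕ}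

def predValue (g : BitString n → ℤ) (d : ℤ) (P : Finset (BitString n)) (x : BitString n) : ℤ :=
  ((P.filter fun z => g z < g x).image g).max.unbotD d

theorem HVC_eq (f : BitString n → ℤ × ℤ) (r : ℤ × ℤ) (x : BitString n)
    (P : Finset (BitString n)) :
    HVC f r x P = ((f x).1 - predValue (fun z => (f z).1) r.1 P x) *
      ((f x).2 - predValue (fun z => (f z).2) r.2 P x) :=
  rfl

theorem HVC_swap (f : BitString n → ℤ × ℤ) (r : ℤ × ℤ) (x : BitString n)
    (P : Finset (BitString n)) : HVC (fun z => (f z).swap) r.swap x P = HVC f r x P := by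
  simp only [HVC_eq, Prod.fst_swap, Prod.snd_swap]
  ring

variable {g : BitString n → ℤ} {d : ℤ} {P : Finset (BitString n)} {x z : BitString n}

theorem predValue_of_forall_le (h : ∀ z ∈ P, g x ≤ g z) : predValue g d P x = d := by
  rw [predValue, Finset.filter_eq_empty_iff.2 fun z hz => not_lt.2 (h z hz), Finset.image_empty,
    Finset.max_empty, WithBot.unbotD_bot]

theorem le_predValue (hz : z ∈ P) (h : g z < g x) : g z ≤ predValue g d P x := by
  have hmem : g z ∈ (P.filter fun z => g z < g x).image g :=
    Finset.mem_image_of_mem g (Finset.mem_filter.2 ⟨hz, h⟩)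
  rw [predValue, ← Finset.coe_max' ⟨_, hmem⟩, WithBot.unbotD_coe]
  exact Finset.le_max' _ _ hmem

theorem predValue_lt_of_mem (hz : z ∈ P) (h : g z < g x) : predValue g d P x < g x := by
  have hne : ((P.filter fun z => g z < g x).image g).Nonempty :=
    ⟨g z, Finset.mem_image_of_mem g (Finset.mem_filter.2 ⟨hz, h⟩)⟩
  rw [predValue, ← Finset.coe_max' hne, WithBot.unbotD_coe]
  obtain ⟨y, hy, hyv⟩ := Finset.mem_image.1 (Finset.max'_mem _ hne)
  exact hyv ▸ (Finset.mem_filter.1 hy).2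

theorem predValue_lt_or_eq : predValue g d P x < g x ∨ predValue g d P x = d := by
  by_cases h : ∃ z ∈ P, g z < g x
  · obtain ⟨z, hz, hzx⟩ := h
    exact Or.inl (predValue_lt_of_mem hz hzx)
  · exact Or.inr (predValue_of_forall_le fun z hz => not_lt.1 fun hzx => h ⟨z, hz, hzx⟩)

theorem sq_le_HVC_of_forall_fst_le {f : BitString n → ℤ × ℤ} {r : ℤ × ℤ} {m : ℤ}
    (hx1 : 0 ≤ (f x).1) (hx2 : 0 ≤ (f x).2) (hr1 : r.1 ≤ -m ^ 2) (hr2 : r.2 ≤ -m ^ 2)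
    (hmin : ∀ z ∈ P, (f x).1 ≤ (f z).1) : m ^ 2 ≤ HVC f r x P := by
  rw [HVC_eq, predValue_of_forall_le hmin]
  have := Int.le_self_sq (m ^ 2)
  rcases predValue_lt_or_eq (g := fun z => (f z).2) (d := r.2) (P := P) (x := x) with h | h
  · nlinarith
  · rw [h]
    nlinarith

theorem OnAntidiagonal.sq_le_HVC {f : BitString n → ℤ × ℤ} {r : ℤ × ℤ} {m : ℤ}
    (hP : OnAntidiagonal f m P) (hx : x ∈ P) (hr1 : r.1 ≤ -m ^ 2) (hr2 : r.2 ≤ -m ^ 2)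
    (hb : IsBoundary (fun z => (f z).1) P x) : m ^ 2 ≤ HVC f r x P := by
  obtain ⟨hx1, hx2, hxsum⟩ := hP x hx
  rcases hb with hmin | hmax
  · exact sq_le_HVC_of_forall_fst_le hx1 hx2 hr1 hr2 hmin
  · have hmin : ∀ z ∈ P, (f x).2 ≤ (f z).2 := fun z hz => by
      linarith [(hP z hz).2.2, hmax z hz]
    rw [← HVC_swap]
    exact sq_le_HVC_of_forall_fst_le hx2 hx1 hr2 hr1 hmin

theorem OnAntidiagonal.exists_HVC_eq_mul {f : BitString n → ℤ × ℤ} {r : ℤ × ℤ} {m : ℤ}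
    (hP : OnAntidiagonal f m P) (hx : x ∈ P) (hb : ¬ IsBoundary (fun z => (f z).1) P x) :
    ∃ a b : ℤ, 1 ≤ a ∧ 1 ≤ b ∧ a + b ≤ m ∧ HVC f r x P = a * b := by
  obtain ⟨⟨y, hy, hyx⟩, ⟨z, hz, hxz⟩⟩ := not_isBoundary_iff.1 hb
  obtain ⟨-, -, hxsum⟩ := hP x hx
  obtain ⟨hy1, -, -⟩ := hP y hy
  obtain ⟨-, hz2, hzsum⟩ := hP z hz
  have hzx : (f z).2 < (f x).2 := by linarith
  have := le_predValue (g := fun z => (f z).1) (d := r.1) hy hyx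
  have := predValue_lt_of_mem (g := fun z => (f z).1) (d := r.1) hy hyx
  have := le_predValue (g := fun z => (f z).2) (d := r.2) hz hzx
  have := predValue_lt_of_mem (g := fun z => (f z).2) (d := r.2) hz hzx
  exact ⟨_, _, by linarith, by linarith, by linarith, HVC_eq f r x P⟩

theorem OnAntidiagonal.four_mul_HVC_le_sq {f : BitString n → ℤ × ℤ} {r : ℤ × ℤ} {m : ℤ}
    (hP : OnAntidiagonal f m P) (hx : x ∈ P) (hb : ¬ IsBoundary (fun z => (f z).1) P x) :
    4 * HVC f r x P ≤ m ^ 2 := by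
  obtain ⟨a, b, ha, hb, hab, hHVC⟩ := hP.exists_HVC_eq_mul (r := r) hx hb
  rw [hHVC]
  nlinarith [four_mul_le_sq_add a b]

theorem OnAntidiagonal.HVC_lt_sq {f : BitString n → ℤ × ℤ} {r : ℤ × ℤ} {m : ℤ}
    (hP : OnAntidiagonal f m P) (hx : x ∈ P) (hb : ¬ IsBoundary (fun z => (f z).1) P x) :
    HVC f r x P < m ^ 2 := by
  have h4 := hP.four_mul_HVC_le_sq (r := r) hx hb
  obtain ⟨a, b, ha, hb, -, hHVC⟩ := hP.exists_HVC_eq_mul (r := r) hx hb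
  rw [hHVC] at h4 ⊢
  nlinarith

end Hypervolume

section CrowdingDistance

variable {n : ℕ}

theorem CDCobj_eq_top_iff {g : BitString n → ℤ} {x : BitString n} {P : Finset (BitString n)} :
    CDCobj g x P = ⊤ ↔ IsBoundary g P x := by
  unfold CDCobj
  split_ifs with h
  · exact iff_of_true rfl h
  refine iff_of_false ?_ h
  obtain ⟨⟨u, hu, hux⟩, ⟨v, hv, hxv⟩⟩ := not_isBoundary_iff.1 h
  have hne : (P.image g).Nonempty := ⟨g u, Finset.mem_image_of_mem g hu⟩
  have hspread : (P.image g).min' hne < (P.image g).max' hne :=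
    ((Finset.min'_le _ _ (Finset.mem_image_of_mem g hu)).trans_lt (hux.trans hxv)).trans_le
      (Finset.le_max' _ _ (Finset.mem_image_of_mem g hv))
  rw [← Finset.coe_max' hne, ← Finset.coe_min' hne, WithBot.unbotD_coe, WithTop.untopD_coe]
  refine ENNReal.div_ne_top (ENNReal.natCast_ne_top _) ?_
  exact_mod_cast (by omega : ((P.image g).max' hne - (P.image g).min' hne).toNat ≠ 0)

theorem CDC_eq_top_iff {f : BitString n → ℤ × ℤ} {x : BitString n} {P : Finset (BitString n)} :
    CDC f x P = ⊤ ↔ IsBoundary (fun z => (f z).1) P x ∨ IsBoundary (fun z => (f z).2) P x := by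
  rw [CDC, ENNReal.add_eq_top, CDCobj_eq_top_iff, CDCobj_eq_top_iff]

theorem OnAntidiagonal.CDC_eq_top_iff {f : BitString n → ℤ × ℤ} {m : ℤ} {x : BitString n}
    {P : Finset (BitString n)} (hP : OnAntidiagonal f m P) (hx : x ∈ P) :
    CDC f x P = ⊤ ↔ IsBoundary (fun z => (f z).1) P x := by
  rw [EMO.CDC_eq_top_iff, hP.isBoundary_snd_iff hx, or_self]

end CrowdingDistance

section LOTZ

variable {n : ℕ}

theorem lt_leadingOnes_iff (x : BitString n) (i : Fin n) :
    (i : ℕ) < leadingOnes x ↔ ∀ j ≤ i, x j = true :=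
  Fin.lt_card_filter_univ_iff_apply_of_imp _ fun _ _ hji hi k hkj => hi k (hkj.trans hji)

theorem sub_trailingZeros_le_iff (x : BitString n) (i : Fin n) :
    n - trailingZeros x ≤ i ↔ ∀ j, i ≤ j → x j = false := by
  -- the positions not followed by zeros only form an initial segment of length `n - TZ x`
  have hcard := Finset.card_filter_add_card_filter_not (s := Finset.univ)
    fun i : Fin n => ∀ j, i ≤ j → x j = false
  have hnot := Fin.lt_card_filter_univ_iff_apply_of_imp (j := i)
    (fun i : Fin n => ¬ ∀ j, i ≤ j → x j = false)
    fun _ _ hlk hk hl => hk fun j hj => hl j (hlk.trans hj)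
  rw [Finset.card_univ, Fintype.card_fin] at hcard
  rw [← not_iff_not, not_le, ← hnot]
  unfold trailingZeros
  omega

theorem leadingOnes_le (x : BitString n) : leadingOnes x ≤ n :=
  (Finset.card_le_univ _).trans_eq (Fintype.card_fin n)

theorem trailingZeros_le (x : BitString n) : trailingZeros x ≤ n :=
  (Finset.card_le_univ _).trans_eq (Fintype.card_fin n)

theorem leadingOnes_add_trailingZeros_le (x : BitString n) :
    leadingOnes x + trailingZeros x ≤ n := by
  by_contra! h
  have := leadingOnes_le x
  have := trailingZeros_le x
  have hi : n - trailingZeros x < n := by omega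
  have hone := (lt_leadingOnes_iff x ⟨_, hi⟩).1 (show n - trailingZeros x < _ by omega) _ le_rfl
  have hzero := (sub_trailingZeros_le_iff x ⟨_, hi⟩).1 le_rfl _ le_rfl
  simp [hone] at hzero

theorem leadingOnes_opt {k : ℕ} (hk : k ≤ n) : leadingOnes (opt n k) = k := by
  have : (Finset.univ.filter fun i : Fin n => ∀ j ≤ i, opt n k j = true) =
      Finset.univ.filter fun i : Fin n => (i : ℕ) < k := by
    ext i
    simp only [opt, decide_eq_true_eq, Finset.mem_filter, Finset.mem_univ, true_and]
    exact ⟨fun h => h i le_rfl, fun h j hj => lt_of_le_of_lt hj h⟩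
  rw [leadingOnes, this, Fin.card_filter_val_lt, min_eq_right hk]

theorem trailingZeros_opt {k : ℕ} (hk : k ≤ n) : trailingZeros (opt n k) = n - k := by
  have : (Finset.univ.filter fun i : Fin n => ∀ j, i ≤ j → opt n k j = false) =
      Finset.univ.filter fun i : Fin n => ¬ (i : ℕ) < k := by
    ext i
    simp only [opt, decide_eq_false_iff_not, Finset.mem_filter, Finset.mem_univ, true_and]
    exact ⟨fun h => h i le_rfl, fun h j hj => fun hjk => h (lt_of_le_of_lt hj hjk)⟩
  have hcard := Finset.card_filter_add_card_filter_not (s := Finset.univ)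
    fun i : Fin n => (i : ℕ) < k
  rw [Fin.card_filter_val_lt, Finset.card_univ, Fintype.card_fin] at hcard
  rw [trailingZeros, this]
  omega

theorem leadingOnes_add_trailingZeros_of_paretoOptimal {x : BitString n}
    (hx : paretoOptimal LOTZ x) : leadingOnes x + trailingZeros x = n := by
  refine (leadingOnes_add_trailingZeros_le x).antisymm (not_lt.1 fun hlt => hx ?_)
  have hk : leadingOnes x + 1 ≤ n := by omega
  refine ⟨opt n (leadingOnes x + 1), ?_⟩
  simp only [dominates, LOTZ, leadingOnes_opt hk, trailingZeros_opt hk, ne_eq, Prod.mk.injEq]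
  omega

theorem apply_eq_true_iff_of_paretoOptimal {x : BitString n} (hx : paretoOptimal LOTZ x)
    (i : Fin n) : x i = true ↔ (i : ℕ) < leadingOnes x := by
  refine ⟨fun hi => not_le.1 fun hle => ?_, fun hi => (lt_leadingOnes_iff x i).1 hi i le_rfl⟩
  have hsum := leadingOnes_add_trailingZeros_of_paretoOptimal hx
  have := (sub_trailingZeros_le_iff x i).1 (by omega) i le_rfl
  simp [hi] at this

theorem onesCount_eq_leadingOnes_of_paretoOptimal {x : BitString n}
    (hx : paretoOptimal LOTZ x) : onesCount x = leadingOnes x := by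
  rw [onesCount, Finset.filter_congr fun i _ => apply_eq_true_iff_of_paretoOptimal hx i,
    Fin.card_filter_val_lt, min_eq_right (leadingOnes_le x)]

theorem onAntidiagonal_LOTZ {P : Finset (BitString n)} (hpar : ∀ x ∈ P, paretoOptimal LOTZ x) :
    OnAntidiagonal LOTZ n P := fun x hx =>
  ⟨Int.natCast_nonneg _, Int.natCast_nonneg _, by
    simp only [LOTZ]
    exact_mod_cast leadingOnes_add_trailingZeros_of_paretoOptimal (hpar x hx)⟩

theorem isBoundary_LOTZ_fst_iff {P : Finset (BitString n)} {x : BitString n}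
    (hpar : ∀ x ∈ P, paretoOptimal LOTZ x) (hx : x ∈ P) :
    IsBoundary (fun z => (LOTZ z).1) P x ↔ IsBoundary onesCount P x :=
  isBoundary_congr_of_le_iff hx fun y hy z hz => by
    simp only [LOTZ, onesCount_eq_leadingOnes_of_paretoOptimal (hpar y hy),
      onesCount_eq_leadingOnes_of_paretoOptimal (hpar z hz), Nat.cast_le]

end LOTZ

theorem hdc_selects_extremes_general (n : ℕ) (P : Finset (BitString n))
    (hpar : ∀ x ∈ P, paretoOptimal LOTZ x)
    (r : ℤ × ℤ) (hr1 : r.1 ≤ -(n : ℤ) ^ 2) (hr2 : r.2 ≤ -(n : ℤ) ^ 2) :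
    (∀ x ∈ P, (∃ y ∈ P, (LOTZ y).1 < (LOTZ x).1) → (∃ y ∈ P, (LOTZ x).1 < (LOTZ y).1) →
      4 * HVC LOTZ r x P ≤ (n : ℤ) ^ 2 ∧ HVC LOTZ r x P < (n : ℤ) ^ 2) ∧
    (∀ x ∈ P, ((∀ y ∈ P, (LOTZ x).1 ≤ (LOTZ y).1) ∨ (∀ y ∈ P, (LOTZ y).1 ≤ (LOTZ x).1)) →
      (n : ℤ) ^ 2 ≤ HVC LOTZ r x P) ∧
    (∀ x ∈ P, (CDC LOTZ x P = ⊤ ↔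
      (∀ y ∈ P, (LOTZ x).1 ≤ (LOTZ y).1) ∨ (∀ y ∈ P, (LOTZ y).1 ≤ (LOTZ x).1))) ∧
    (∀ x ∈ (HDCSelect (HVC LOTZ r) P).support,
      (∀ y ∈ P, onesCount x ≤ onesCount y) ∨ (∀ y ∈ P, onesCount y ≤ onesCount x)) ∧
    (∀ x ∈ (HDCSelect (CDC LOTZ) P).support,
      (∀ y ∈ P, onesCount x ≤ onesCount y) ∨ (∀ y ∈ P, onesCount y ≤ onesCount x)) := by
  have hP := onAntidiagonal_LOTZ hpar
  have hones := fun x (hx : x ∈ P) => isBoundary_LOTZ_fst_iff hpar hx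
  refine ⟨fun x hx h₁ h₂ => have hb := not_isBoundary_iff.2 ⟨h₁, h₂⟩
      ⟨hP.four_mul_HVC_le_sq hx hb, hP.HVC_lt_sq hx hb⟩,
    fun x hx => hP.sq_le_HVC hx hr1 hr2, fun x hx => hP.CDC_eq_top_iff hx, ?_, ?_⟩
  · exact fun x => isBoundary_of_mem_support_HDCSelect ((n : ℤ) ^ 2)
      (fun y hy hb => hP.HVC_lt_sq hy (mt (hones y hy).1 hb))
      (fun y hy hb => hP.sq_le_HVC hy hr1 hr2 ((hones y hy).2 hb))
  · exact fun x => isBoundary_of_mem_support_HDCSelect ⊤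
      (fun y hy hb => lt_top_iff_ne_top.2 (mt (hP.CDC_eq_top_iff hy).1 (mt (hones y hy).1 hb)))
      (fun y hy hb => ((hP.CDC_eq_top_iff hy).2 ((hones y hy).2 hb)).ge)

/-- For a population `P` (|P| ≥ 3) of Pareto-optimal points of LOTZ and a
reference point dominated by `(−n², −n²)`: every non-extreme point has hypervolume
contribution at most `n²/4 < n²`, every extreme point (minimum or maximum `f₁`-value)
has hypervolume contribution at least `n²`, CDC is infinite exactly on the two extreme
points, and consequently Highest Diversity Contribution selection (with either measure)
always selects a parent with minimum or maximum number of ones in `P`. -/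
theorem hdc_selects_extremes (n : ℕ) (P : Finset (BitString n)) (hcard : 3 ≤ P.card)
    (hpar : ∀ x ∈ P, paretoOptimal LOTZ x)
    (r : ℤ × ℤ) (hr1 : r.1 ≤ -(n : ℤ) ^ 2) (hr2 : r.2 ≤ -(n : ℤ) ^ 2) :
    (∀ x ∈ P, (∃ y ∈ P, (LOTZ y).1 < (LOTZ x).1) → (∃ y ∈ P, (LOTZ x).1 < (LOTZ y).1) →
      4 * HVC LOTZ r x P ≤ (n : ℤ) ^ 2 ∧ HVC LOTZ r x P < (n : ℤ) ^ 2) ∧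
    (∀ x ∈ P, ((∀ y ∈ P, (LOTZ x).1 ≤ (LOTZ y).1) ∨ (∀ y ∈ P, (LOTZ y).1 ≤ (LOTZ x).1)) →
      (n : ℤ) ^ 2 ≤ HVC LOTZ r x P) ∧
    (∀ x ∈ P, (CDC LOTZ x P = ⊤ ↔
      (∀ y ∈ P, (LOTZ x).1 ≤ (LOTZ y).1) ∨ (∀ y ∈ P, (LOTZ y).1 ≤ (LOTZ x).1))) ∧
    (∀ x ∈ (HDCSelect (HVC LOTZ r) P).support,
      (∀ y ∈ P, onesCount x ≤ onesCount y) ∨ (∀ y ∈ P, onesCount y ≤ onesCount x)) ∧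
    (∀ x ∈ (HDCSelect (CDC LOTZ) P).support,
      (∀ y ∈ P, onesCount x ≤ onesCount y) ∨ (∀ y ∈ P, onesCount y ≤ onesCount x)) :=
  hdc_selects_extremes_general n P hpar r hr1 hr2

end EMO
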